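/- arXiv:2004.09810 — 2 statements merged into one kernel-verified Lean document; each statement's English description precedes it below -/
import Mathlib

section
/- Let f(x_0,...,x_{n-1}) = g(x_1,...,x_{n-1}) be standard and suppose the GPO algorithm on input (f,u) terminates. Then the initial state u is the first state to be visited twice: no state other than u repeats before the algorithm returns to u. -/
/-- The state map of an `n`-stage FSR with feedback function `f`. -/
def stateMap (n : ℕ) (f : (Fin n → ZMod 2) → ZMod 2) (x : Fin n → ZMod 2) :
    Fin n → ZMod 2 :=
  fun i => if h : i.val + 1 < n then x ⟨i.val + 1, h⟩ else f x

/-- A feedback function is standard if it does not depend on the coordinate `x_0`. -/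
def IsStandard (n : ℕ) (f : (Fin n → ZMod 2) → ZMod 2) : Prop :=
  ∀ x y : Fin n → ZMod 2, (∀ i : Fin n, i.val ≠ 0 → x i = y i) → f x = f y

/-- Shift the state `c` one step to the left, feeding in the new bit `b`. -/
def shiftIn (n : ℕ) (c : Fin n → ZMod 2) (b : ZMod 2) : Fin n → ZMod 2 :=
  fun i => if h : i.val + 1 < n then c ⟨i.val + 1, h⟩ else b

/-- One run of the Generalized Prefer-Opposite algorithm: the pair consists of the
current state after `t` steps and the list of all states visited so far.  From the
current state `c` the algorithm moves to `(c_1,...,c_{n-1}, 1 + f(c))` if that state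
has not appeared before, and to `(c_1,...,c_{n-1}, f(c))` otherwise. -/
def gpoRun (n : ℕ) (f : (Fin n → ZMod 2) → ZMod 2) (u : Fin n → ZMod 2) :
    ℕ → (Fin n → ZMod 2) × List (Fin n → ZMod 2)
  | 0 => (u, [u])
  | t + 1 =>
    let p := gpoRun n f u t
    let cand := shiftIn n p.1 (f p.1 + 1)
    let next := if cand ∈ p.2 then shiftIn n p.1 (f p.1) else cand
    (next, next :: p.2)

/-- The state of the GPO algorithm after `t` steps. -/
def gpoState (n : ℕ) (f : (Fin n → ZMod 2) → ZMod 2) (u : Fin n → ZMod 2) (t : ℕ) :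
    Fin n → ZMod 2 :=
  (gpoRun n f u t).1

/-- The GPO algorithm on input `(f, u)` visits the state `v` (before halting, i.e.
before the first return to the initial state `u`). -/
def gpoVisits (n : ℕ) (f : (Fin n → ZMod 2) → ZMod 2) (u v : Fin n → ZMod 2) : Prop :=
  ∃ t, gpoState n f u t = v ∧ ∀ t', 0 < t' → t' < t → gpoState n f u t' ≠ u

lemma gpoState_succ (n : ℕ) (f : (Fin n → ZMod 2) → ZMod 2) (u : Fin n → ZMod 2) (t : ℕ) :
    gpoState n f u (t+1) =
      if shiftIn n (gpoState n f u t) (f (gpoState n f u t) + 1) ∈ (gpoRun n f u t).2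
      then shiftIn n (gpoState n f u t) (f (gpoState n f u t))
      else shiftIn n (gpoState n f u t) (f (gpoState n f u t) + 1) := rfl

lemma gpoRun_snd_succ (n : ℕ) (f : (Fin n → ZMod 2) → ZMod 2) (u : Fin n → ZMod 2) (t : ℕ) :
    (gpoRun n f u (t+1)).2 = gpoState n f u (t+1) :: (gpoRun n f u t).2 := rfl

lemma shiftIn_apply_last (n : ℕ) (hn : 1 ≤ n) (c : Fin n → ZMod 2) (b : ZMod 2) :
    shiftIn n c b ⟨n - 1, by omega⟩ = b := by
  simp only [shiftIn, Fin.val_mk]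
  rw [dif_neg (by omega)]

lemma shiftIn_congr' (n : ℕ) (c c' : Fin n → ZMod 2) (b : ZMod 2)
    (h : ∀ i : Fin n, i.val ≠ 0 → c i = c' i) : shiftIn n c b = shiftIn n c' b := by
  funext j
  simp only [shiftIn]
  split
  · rename_i hj
    exact h ⟨j.val + 1, hj⟩ (by simp)
  · rfl

lemma pred_agree (n : ℕ) (y y' : Fin n → ZMod 2) (b b' : ZMod 2)
    (h : shiftIn n y b = shiftIn n y' b') :
    ∀ i : Fin n, i.val ≠ 0 → y i = y' i := by
  intro i hi
  have h1 : i.val - 1 + 1 < n := by omega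
  have h2 := congrFun h ⟨i.val - 1, by omega⟩
  unfold shiftIn at h2
  rw [dif_pos h1, dif_pos h1] at h2
  have h3 : (⟨i.val - 1 + 1, h1⟩ : Fin n) = i := Fin.ext (by simp; omega)
  rwa [h3] at h2

lemma shiftIn_eq_bit (n : ℕ) (hn : 1 ≤ n) (y y' : Fin n → ZMod 2) (b b' : ZMod 2)
    (h : shiftIn n y b = shiftIn n y' b') : b = b' := by
  have := congrFun h ⟨n - 1, by omega⟩
  rwa [shiftIn_apply_last n hn, shiftIn_apply_last n hn] at this

lemma mem_gpoRun_snd (n : ℕ) (f : (Fin n → ZMod 2) → ZMod 2) (u : Fin n → ZMod 2) :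
    ∀ t v, v ∈ (gpoRun n f u t).2 ↔ ∃ s, s ≤ t ∧ gpoState n f u s = v := by
  intro t
  induction t with
  | zero =>
    intro v
    constructor
    · intro h
      simp only [gpoRun, List.mem_singleton] at h
      exact ⟨0, le_refl 0, h.symm⟩
    · rintro ⟨s, hs, h⟩
      interval_cases s
      simp only [gpoRun, List.mem_singleton]
      exact h.symm
  | succ t ih =>
    intro v
    rw [gpoRun_snd_succ, List.mem_cons, ih]
    constructor
    · rintro (h | ⟨s, hs, h⟩)
      · exact ⟨t+1, le_refl _, h.symm⟩
      · exact ⟨s, by omega, h⟩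
    · rintro ⟨s, hs, h⟩
      rcases Nat.lt_or_ge s (t+1) with h' | h'
      · exact Or.inr ⟨s, by omega, h⟩
      · left; have : s = t + 1 := by omega
        subst this; exact h.symm

lemma zmod2_ne_add_one (v : ZMod 2) : v ≠ v + 1 := by revert v; decide

lemma zmod2_eq_or (a b c : ZMod 2) (h : b ≠ c) : a = b ∨ a = c := by
  revert h; revert a b c; decide

/-- Suppose the GPO algorithm with standard feedback function `f` and
initial state `u` terminates, first returning to `u` at time `N`.  Then no state other
than `u` repeats before the algorithm returns to `u`: the states at times
`0, 1, ..., N-1` are pairwise distinct. -/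
theorem gpo_initial_state_first_repeat (n : ℕ) (hn : 1 ≤ n)
    (f : (Fin n → ZMod 2) → ZMod 2) (hf : IsStandard n f) (u : Fin n → ZMod 2)
    (N : ℕ) (hN : 0 < N) (hret : gpoState n f u N = u)
    (hmin : ∀ T, 0 < T → gpoState n f u T = u → N ≤ T) :
    ∀ t₁ t₂, t₁ < N → t₂ < N → gpoState n f u t₁ = gpoState n f u t₂ → t₁ = t₂ := by
  classical
  set st := gpoState n f u with hst
  -- case split helper for one step
  have hstep : ∀ r : ℕ,
      (shiftIn n (st r) (f (st r) + 1) ∈ (gpoRun n f u r).2 ∧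
        st (r+1) = shiftIn n (st r) (f (st r))) ∨
      (shiftIn n (st r) (f (st r) + 1) ∉ (gpoRun n f u r).2 ∧
        st (r+1) = shiftIn n (st r) (f (st r) + 1)) := by
    intro r
    by_cases hmem : shiftIn n (st r) (f (st r) + 1) ∈ (gpoRun n f u r).2
    · left
      exact ⟨hmem, by rw [hst, gpoState_succ, if_pos hmem]⟩
    · right
      exact ⟨hmem, by rw [hst, gpoState_succ, if_neg hmem]⟩
  intro t₁ t₂ h1 h2 heq
  by_contra hne
  have key : ∃ m, m < N ∧ ∃ s, s < m ∧ st s = st m := by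
    rcases Nat.lt_or_ge t₁ t₂ with h | h
    · exact ⟨t₂, h2, t₁, h, heq⟩
    · exact ⟨t₁, h1, t₂, by omega, heq.symm⟩
  suffices main : ∀ m, m < N → (∀ a b, a < b → b < m → st a ≠ st b) →
      ∀ s, s < m → st s ≠ st m by
    obtain ⟨hmN, s₁, hs₁m, heqs⟩ := Nat.find_spec key
    have hdist : ∀ a b, a < b → b < Nat.find key → st a ≠ st b := by
      intro a b hab hbm habs
      exact Nat.find_min key hbm ⟨by omega, a, hab, habs⟩
    exact main (Nat.find key) hmN hdist s₁ hs₁m heqs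
  intro m hmN hdist s₁ hs₁m heqs
  -- s₁ > 0, else contradiction with minimality of N
  have hs₁pos : 0 < s₁ := by
    by_contra h0
    have : s₁ = 0 := by omega
    subst this
    have hu : st m = u := heqs.symm
    have := hmin m (by omega) hu
    omega
  obtain ⟨r₁, rfl⟩ : ∃ r, s₁ = r + 1 := ⟨s₁ - 1, by omega⟩
  obtain ⟨r₂, rfl⟩ : ∃ r, m = r + 1 := ⟨m - 1, by omega⟩
  have hr12 : r₁ < r₂ := by omega
  set d := st r₁ with hd
  set e := st r₂ with he
  -- both steps land on the same state c := st (r₁+1)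
  have hc2 : st (r₂ + 1) = st (r₁ + 1) := heqs.symm
  -- transitions
  have hstep1 := hstep r₁
  have hstep2 := hstep r₂
  -- d and e agree off coordinate 0
  have hshift_eq : ∃ b b', shiftIn n d b = shiftIn n e b' := by
    rcases hstep1 with ⟨_, h1'⟩ | ⟨_, h1'⟩ <;> rcases hstep2 with ⟨_, h2'⟩ | ⟨_, h2'⟩ <;>
      exact ⟨_, _, by rw [← h1', ← h2', hc2]⟩
  obtain ⟨b, b', hbb⟩ := hshift_eq
  have hagree : ∀ i : Fin n, i.val ≠ 0 → d i = e i := pred_agree n d e b b' hbb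
  have hfde : f d = f e := hf d e hagree
  have hdne : d ≠ e := hdist r₁ r₂ hr12 (by omega)
  have hshiftde : ∀ x : ZMod 2, shiftIn n d x = shiftIn n e x := fun x =>
    shiftIn_congr' n d e x hagree
  -- the step at r₂ must be the non-candidate branch
  rcases hstep2 with ⟨hcand2, h2'⟩ | ⟨hcand2, h2'⟩
  · -- non-candidate at r₂; analyze step at r₁
    rcases hstep1 with ⟨hcand1, h1'⟩ | ⟨hcand1, h1'⟩
    · -- non-candidate at both: the candidate w was visited at some s ≤ r₁
      set w := shiftIn n d (f d + 1) with hw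
      obtain ⟨s, hs, hsw⟩ := (mem_gpoRun_snd n f u r₁ w).mp hcand1
      rcases Nat.eq_zero_or_pos s with rfl | hspos
      · -- w = u
        have hwu : u = w := by rw [← hsw]; rfl
        obtain ⟨q, rfl⟩ : ∃ q, N = q + 1 := ⟨N - 1, by omega⟩
        have humem : u ∈ (gpoRun n f u q).2 :=
          (mem_gpoRun_snd n f u q u).mpr ⟨0, by omega, rfl⟩
        rcases hstep q with ⟨_, hq'⟩ | ⟨hcq, hq'⟩
        · -- u = shiftIn (st q) (f (st q)), but u = w has last bit f d + 1
          have h5 : shiftIn n (st q) (f (st q)) = shiftIn n d (f d + 1) := by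
            rw [← hq', hret, hwu]
          have hyd : ∀ i : Fin n, i.val ≠ 0 → st q i = d i :=
            pred_agree n (st q) d _ _ h5
          have hfy : f (st q) = f d := hf _ _ hyd
          have := shiftIn_eq_bit n hn _ _ _ _ h5
          rw [hfy] at this
          exact zmod2_ne_add_one (f d) this
        · -- candidate taken at step q, so u ∉ list q: contradiction
          rw [← hq'] at hcq
          rw [hret] at hcq
          exact hcq humem
      · -- 0 < s: predecessor of w is d or e, at time < r₁
        obtain ⟨p, rfl⟩ : ∃ p, s = p + 1 := ⟨s - 1, by omega⟩
        have hps : ∃ b3 : ZMod 2, shiftIn n (st p) b3 = w := by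
          rcases hstep p with ⟨_, hp'⟩ | ⟨_, hp'⟩ <;> exact ⟨_, by rw [← hp']; exact hsw⟩
        obtain ⟨b3, hb3⟩ := hps
        have hpd : ∀ i : Fin n, i.val ≠ 0 → st p i = d i :=
          pred_agree n (st p) d b3 (f d + 1) (by rw [hb3, hw])
        have hd0ne : d ⟨0, by omega⟩ ≠ e ⟨0, by omega⟩ := by
          intro h0
          apply hdne
          funext i
          by_cases hi : i.val = 0
          · have : i = (⟨0, by omega⟩ : Fin n) := Fin.ext hi
            rw [this]; exact h0
          · exact hagree i hi
        have h0or := zmod2_eq_or (st p ⟨0, by omega⟩) (d ⟨0, by omega⟩)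
          (e ⟨0, by omega⟩) hd0ne
        have hpde : st p = d ∨ st p = e := by
          rcases h0or with h0 | h0
          · left; funext i
            by_cases hi : i.val = 0
            · have : i = (⟨0, by omega⟩ : Fin n) := Fin.ext hi
              rw [this]; exact h0
            · exact hpd i hi
          · right; funext i
            by_cases hi : i.val = 0
            · have : i = (⟨0, by omega⟩ : Fin n) := Fin.ext hi
              rw [this]; exact h0
            · rw [hpd i hi]; exact hagree i hi
        rcases hpde with h0 | h0
        · exact hdist p r₁ (by omega) (by omega) h0
        · exact hdist p r₂ (by omega) (by omega) h0
    · -- candidate at r₁, non-candidate at r₂: feed bits must be equal, contradiction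
      have h5 : shiftIn n d (f d + 1) = shiftIn n e (f e) := by
        rw [← h1', ← h2', hc2]
      have := shiftIn_eq_bit n hn _ _ _ _ h5
      rw [← hfde] at this
      exact zmod2_ne_add_one (f d) this.symm
  · -- candidate taken at r₂, but st (r₂+1) = st (r₁+1) was already visited
    apply hcand2
    rw [← h2', hc2]
    exact (mem_gpoRun_snd n f u r₂ (st (r₁ + 1))).mpr ⟨r₁ + 1, by omega, rfl⟩
end

section
/- Let f be a standard feedback function and run the GPO algorithm from a non-leaf initial state u. For any visited state v ≠ u having two children in the state graph G_f, by the time the algorithm visits v it has already visited both children of v. -/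
section Aux

variable {n : ℕ} {f : (Fin n → ZMod 2) → ZMod 2} {u : Fin n → ZMod 2}

lemma zmod2_cases : ∀ a b : ZMod 2, a = b ∨ a = b + 1 := by decide

lemma zmod2_ne : ∀ a : ZMod 2, a ≠ a + 1 := by decide

lemma stateMap_eq (x : Fin n → ZMod 2) : stateMap n f x = shiftIn n x (f x) := rfl

lemma gpoState_zero : gpoState n f u 0 = u := rfl

lemma gpo_step (m : ℕ) :
    gpoState n f u (m+1) =
      if shiftIn n (gpoState n f u m) (f (gpoState n f u m) + 1) ∈ (gpoRun n f u m).2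
      then shiftIn n (gpoState n f u m) (f (gpoState n f u m))
      else shiftIn n (gpoState n f u m) (f (gpoState n f u m) + 1) := rfl

lemma run_snd_succ (m : ℕ) :
    (gpoRun n f u (m+1)).2 = gpoState n f u (m+1) :: (gpoRun n f u m).2 := rfl

lemma mem_run_snd (m : ℕ) (x : Fin n → ZMod 2) :
    x ∈ (gpoRun n f u m).2 ↔ ∃ e, e ≤ m ∧ gpoState n f u e = x := by
  induction m with
  | zero =>
    constructor
    · intro h
      simp only [gpoRun, List.mem_singleton] at h
      exact ⟨0, le_refl 0, h.symm⟩
    · rintro ⟨e, he, hx⟩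
      have : e = 0 := Nat.le_zero.mp he
      subst this
      simp only [gpoRun, List.mem_singleton]
      exact hx.symm
  | succ m ih =>
    rw [run_snd_succ, List.mem_cons, ih]
    constructor
    · rintro (h | ⟨e, he, hx⟩)
      · exact ⟨m+1, le_refl _, h.symm⟩
      · exact ⟨e, Nat.le_succ_of_le he, hx⟩
    · rintro ⟨e, he, hx⟩
      rcases Nat.le_succ_iff.mp he with h | h
      · exact Or.inr ⟨e, h, hx⟩
      · subst h; exact Or.inl hx.symm

lemma shiftIn_last (hn : 0 < n) (c : Fin n → ZMod 2) (b : ZMod 2) :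
    shiftIn n c b ⟨n-1, Nat.sub_lt hn one_pos⟩ = b := by
  simp only [shiftIn]
  rw [dif_neg (by omega)]

lemma shiftIn_apply_succ (c : Fin n → ZMod 2) (b : ZMod 2) (j : ℕ) (h : j + 1 < n) :
    shiftIn n c b ⟨j, by omega⟩ = c ⟨j+1, h⟩ := by
  simp only [shiftIn]
  rw [dif_pos h]

lemma parents_agree {c c' y : Fin n → ZMod 2} {b b' : ZMod 2}
    (h : shiftIn n c b = y) (h' : shiftIn n c' b' = y) :
    ∀ k : Fin n, k.val ≠ 0 → c k = c' k := by
  intro k hk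
  have hk' : k.val - 1 + 1 < n := by omega
  have h1 := congrFun h ⟨k.val - 1, by omega⟩
  have h2 := congrFun h' ⟨k.val - 1, by omega⟩
  rw [shiftIn_apply_succ c b (k.val - 1) hk'] at h1
  rw [shiftIn_apply_succ c' b' (k.val - 1) hk'] at h2
  have hfin : (⟨k.val - 1 + 1, hk'⟩ : Fin n) = k := Fin.ext (by simp only [Fin.val_mk]; omega)
  rw [hfin] at h1 h2
  rw [h1, h2]

lemma entry_cases (m : ℕ) :
    (gpoState n f u (m+1) = shiftIn n (gpoState n f u m) (f (gpoState n f u m)) ∧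
      shiftIn n (gpoState n f u m) (f (gpoState n f u m) + 1) ∈ (gpoRun n f u m).2) ∨
    (gpoState n f u (m+1) = shiftIn n (gpoState n f u m) (f (gpoState n f u m) + 1) ∧
      shiftIn n (gpoState n f u m) (f (gpoState n f u m) + 1) ∉ (gpoRun n f u m).2) := by
  rw [gpo_step]
  split
  · exact Or.inl ⟨rfl, by assumption⟩
  · exact Or.inr ⟨rfl, by assumption⟩

lemma entry_shiftIn (m : ℕ) :
    ∃ β, gpoState n f u (m+1) = shiftIn n (gpoState n f u m) β := by
  rcases entry_cases (n := n) (f := f) (u := u) m with ⟨h, _⟩ | ⟨h, _⟩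
  · exact ⟨_, h⟩
  · exact ⟨_, h⟩

end Aux
lemma conj_ne_u {n : ℕ} {f : (Fin n → ZMod 2) → ZMod 2} {u : Fin n → ZMod 2}
    (hn : 0 < n) (hf : IsStandard n f) (hu : ∃ w, stateMap n f w = u)
    (p : Fin n → ZMod 2) : shiftIn n p (f p + 1) ≠ u := by
  intro h
  obtain ⟨z, hz⟩ := hu
  rw [stateMap_eq, ← h] at hz
  have hag : ∀ k : Fin n, k.val ≠ 0 → z k = p k := parents_agree hz rfl
  have hfz : f z = f p := hf z p hag
  have h1 := congrFun hz ⟨n-1, Nat.sub_lt hn one_pos⟩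
  rw [shiftIn_last hn, shiftIn_last hn, hfz] at h1
  exact zmod2_ne _ h1

lemma no_repeat {n : ℕ} {f : (Fin n → ZMod 2) → ZMod 2} {u : Fin n → ZMod 2}
    (hn : 0 < n) (hf : IsStandard n f) (hu : ∃ w, stateMap n f w = u)
    (t : ℕ) (hrun : ∀ t', 0 < t' → t' < t → gpoState n f u t' ≠ u) :
    ∀ b, b < t → ∀ a, 0 < a → a < b → gpoState n f u a ≠ gpoState n f u b := by
  intro b
  induction b using Nat.strong_induction_on with
  | _ b IH =>
    intro hbt a ha hab heq
    obtain ⟨a', rfl⟩ : ∃ a', a = a' + 1 := ⟨a - 1, by omega⟩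
    obtain ⟨b', rfl⟩ : ∃ b', b = b' + 1 := ⟨b - 1, by omega⟩
    obtain ⟨β, hβ⟩ := entry_shiftIn (n:=n) (f:=f) (u:=u) a'
    obtain ⟨β', hβ'⟩ := entry_shiftIn (n:=n) (f:=f) (u:=u) b'
    rw [heq] at hβ
    have hagpp' : ∀ k : Fin n, k.val ≠ 0 →
        gpoState n f u a' k = gpoState n f u b' k := parents_agree hβ.symm hβ'.symm
    have hfpp' : f (gpoState n f u a') = f (gpoState n f u b') := hf _ _ hagpp'
    have hb_mem : gpoState n f u (a'+1) ∈ (gpoRun n f u b').2 :=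
      (mem_run_snd _ _).mpr ⟨a'+1, by omega, rfl⟩
    rcases entry_cases (n:=n) (f:=f) (u:=u) b' with ⟨hYb, hmemb⟩ | ⟨hYb, hnm⟩
    swap
    · rw [hYb] at heq
      rw [heq] at hb_mem
      exact hnm hb_mem
    rcases entry_cases (n:=n) (f:=f) (u:=u) a' with ⟨hYa, hmema⟩ | ⟨hYa, _⟩
    swap
    · have h1 : gpoState n f u (a'+1) ⟨n-1, Nat.sub_lt hn one_pos⟩
          = f (gpoState n f u a') + 1 := by rw [hYa]; exact shiftIn_last hn _ _
      have h2 : gpoState n f u (b'+1) ⟨n-1, Nat.sub_lt hn one_pos⟩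
          = f (gpoState n f u b') := by rw [hYb]; exact shiftIn_last hn _ _
      rw [heq, h2, ← hfpp'] at h1
      exact zmod2_ne _ h1
    obtain ⟨e, hea, he⟩ := (mem_run_snd _ _).mp hmema
    obtain ⟨e', rfl⟩ : ∃ e', e = e' + 1 := by
      rcases Nat.eq_zero_or_pos e with h0 | h0
      · exfalso; rw [h0, gpoState_zero] at he
        exact conj_ne_u hn hf hu _ he.symm
      · exact ⟨e - 1, by omega⟩
    obtain ⟨γ, hγ⟩ := entry_shiftIn (n:=n) (f:=f) (u:=u) e'
    rw [he] at hγ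
    have hagqp : ∀ k : Fin n, k.val ≠ 0 →
        gpoState n f u e' k = gpoState n f u a' k := parents_agree hγ.symm rfl
    have ha'pos : 0 < a' := by omega
    by_cases hpp' : gpoState n f u a' = gpoState n f u b'
    · exact IH b' (by omega) (by omega) a' ha'pos (by omega) hpp'
    · have hp0 : gpoState n f u a' ⟨0, hn⟩ ≠ gpoState n f u b' ⟨0, hn⟩ := by
        intro h0
        apply hpp'
        funext k
        by_cases hk : k.val = 0
        · have hk' : k = ⟨0, hn⟩ := Fin.ext hk
          rw [hk']; exact h0
        · exact hagpp' k hk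
      rcases zmod2_cases (gpoState n f u e' ⟨0, hn⟩) (gpoState n f u a' ⟨0, hn⟩)
        with hq0 | hq0
      · have hqp : gpoState n f u e' = gpoState n f u a' := by
          funext k
          by_cases hk : k.val = 0
          · have hk' : k = ⟨0, hn⟩ := Fin.ext hk
            rw [hk']; exact hq0
          · exact hagqp k hk
        have he'pos : 0 < e' := by
          rcases Nat.eq_zero_or_pos e' with h0 | h0
          · exfalso
            have hne : gpoState n f u a' ≠ u := hrun a' ha'pos (by omega)
            rw [← hqp] at hne
            exact hne (by rw [h0]; rfl)
          · exact h0
        exact IH a' (by omega) (by omega) e' he'pos (by omega) hqp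
      · have hp'0 : gpoState n f u b' ⟨0, hn⟩ = gpoState n f u a' ⟨0, hn⟩ + 1 := by
          rcases zmod2_cases (gpoState n f u b' ⟨0, hn⟩) (gpoState n f u a' ⟨0, hn⟩)
            with h0 | h0
          · exact absurd h0.symm hp0
          · exact h0
        have hqp' : gpoState n f u e' = gpoState n f u b' := by
          funext k
          by_cases hk : k.val = 0
          · have hk' : k = ⟨0, hn⟩ := Fin.ext hk
            rw [hk', hq0, hp'0]
          · rw [hagqp k hk, hagpp' k hk]
        have he'pos : 0 < e' := by
          rcases Nat.eq_zero_or_pos e' with h0 | h0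
          · exfalso
            have hne : gpoState n f u b' ≠ u := hrun b' (by omega) (by omega)
            rw [← hqp'] at hne
            exact hne (by rw [h0]; rfl)
          · exact h0
        exact IH b' (by omega) (by omega) e' he'pos (by omega) hqp'


/-- Run the GPO algorithm with a standard feedback function `f` from a
non-leaf initial state `u`.  If at some time `t` (before the run has returned to `u`)
the algorithm visits a state `v ≠ u` having two children in the state graph `G_f`,
then both children of `v` were visited at earlier times. -/
theorem gpo_children_visited (n : ℕ) (hn : 1 ≤ n)
    (f : (Fin n → ZMod 2) → ZMod 2) (hf : IsStandard n f) (u : Fin n → ZMod 2)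
    (hu : ∃ w, stateMap n f w = u)
    (t : ℕ) (v : Fin n → ZMod 2)
    (hrun : ∀ t', 0 < t' → t' < t → gpoState n f u t' ≠ u)
    (hv : gpoState n f u t = v) (hvu : v ≠ u)
    (hchildren : ∃ w₁ w₂, w₁ ≠ w₂ ∧ stateMap n f w₁ = v ∧ stateMap n f w₂ = v) :
    ∀ w, stateMap n f w = v → ∃ t' < t, gpoState n f u t' = w := by
  have hn0 : 0 < n := hn
  obtain ⟨w₁, w₂, hw12, hw₁, _⟩ := hchildren
  obtain ⟨t'', rfl⟩ : ∃ t'', t = t'' + 1 := by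
    rcases Nat.eq_zero_or_pos t with h0 | h0
    · exfalso; rw [h0] at hv; exact hvu (by rw [← hv]; rfl)
    · exact ⟨t - 1, by omega⟩
  obtain ⟨β, hβ⟩ := entry_shiftIn (n:=n) (f:=f) (u:=u) t''
  rw [hv] at hβ
  rw [stateMap_eq] at hw₁
  have hagc : ∀ k : Fin n, k.val ≠ 0 → gpoState n f u t'' k = w₁ k :=
    parents_agree hβ.symm hw₁
  have hfc : f (gpoState n f u t'') = f w₁ := hf _ _ hagc
  have hvlast : v ⟨n-1, Nat.sub_lt hn0 one_pos⟩ = f (gpoState n f u t'') := by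
    rw [← hw₁, shiftIn_last hn0, hfc]
  rcases entry_cases (n:=n) (f:=f) (u:=u) t'' with ⟨hvc, hmem⟩ | ⟨hvc, _⟩
  swap
  · exfalso
    have h1 := congrFun hvc ⟨n-1, Nat.sub_lt hn0 one_pos⟩
    rw [shiftIn_last hn0, hv, hvlast] at h1
    exact zmod2_ne _ h1
  obtain ⟨e, het, he⟩ := (mem_run_snd _ _).mp hmem
  obtain ⟨e', rfl⟩ : ∃ e', e = e' + 1 := by
    rcases Nat.eq_zero_or_pos e with h0 | h0
    · exfalso; rw [h0, gpoState_zero] at he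
      exact conj_ne_u hn0 hf hu _ he.symm
    · exact ⟨e - 1, by omega⟩
  obtain ⟨γ, hγ⟩ := entry_shiftIn (n:=n) (f:=f) (u:=u) e'
  rw [he] at hγ
  have hagq : ∀ k : Fin n, k.val ≠ 0 →
      gpoState n f u e' k = gpoState n f u t'' k := parents_agree hγ.symm rfl
  intro w hw
  rw [stateMap_eq] at hw
  have hvc' : v = shiftIn n (gpoState n f u t'') (f (gpoState n f u t'')) := by
    rw [← hv, hvc]
  have hagw : ∀ k : Fin n, k.val ≠ 0 → w k = gpoState n f u t'' k :=
    parents_agree hw hvc'.symm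
  by_cases hwc : w = gpoState n f u t''
  · exact ⟨t'', by omega, hwc.symm⟩
  · have hw0 : w ⟨0, hn0⟩ ≠ gpoState n f u t'' ⟨0, hn0⟩ := by
      intro h0
      apply hwc
      funext k
      by_cases hk : k.val = 0
      · have hk' : k = ⟨0, hn0⟩ := Fin.ext hk
        rw [hk']; exact h0
      · exact hagw k hk
    rcases zmod2_cases (gpoState n f u e' ⟨0, hn0⟩) (gpoState n f u t'' ⟨0, hn0⟩)
      with h0 | h0
    · exfalso
      have hqc : gpoState n f u e' = gpoState n f u t'' := by
        funext k
        by_cases hk : k.val = 0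
        · have hk' : k = ⟨0, hn0⟩ := Fin.ext hk
          rw [hk']; exact h0
        · exact hagq k hk
      rcases Nat.eq_zero_or_pos e' with hz | hz
      · have hne : gpoState n f u t'' ≠ u := hrun t'' (by omega) (by omega)
        exact hne (by rw [← hqc, hz]; rfl)
      · exact no_repeat hn0 hf hu (t''+1) hrun t'' (by omega) e' hz (by omega) hqc
    · have hqw : gpoState n f u e' = w := by
        funext k
        by_cases hk : k.val = 0
        · have hk' : k = ⟨0, hn0⟩ := Fin.ext hk
          rcases zmod2_cases (w ⟨0, hn0⟩) (gpoState n f u t'' ⟨0, hn0⟩) with h1 | h1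
          · exact absurd h1 hw0
          · rw [hk', h0, h1]
        · rw [hagq k hk, ← hagw k hk]
      exact ⟨e', by omega, hqw⟩
end
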